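/- arXiv:1801.05197 — 2 statements merged into one kernel-verified Lean document; each statement's English description precedes it below -/
import Mathlib

section
/- Let n ≥ 5 be odd, m = (n+1)/2, and a the entries of M_n (odd case). Then σ̃(2,n) := #{(k,l) : 1 ≤ k < 2 < l < n, a(k,l) = a(2,n)} = m - 3. -/
/-- Entry `a_{(i,j)}` of the matrix `M_n` for odd `n`. -/
def Mn (n i j : ℤ) : ℤ :=
  if j ≤ i + 1 ∨ (i, j) = (1, n) then 0
  else if ((n+3)/2 - i ≤ j ∧ j ≤ n - i) ∨ j ≥ (3*n+1)/2 - i then 1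
  else -1

/-- `σ̃(i,j)`: number of pairs `(k,l)` with `1 ≤ k < i < l < j` and `a(k,l) = a(i,j)`. -/
noncomputable def sigmaTilde (n i j : ℤ) : ℕ :=
  ((Finset.Icc 1 n ×ˢ Finset.Icc 1 n).filter
    (fun p => 1 ≤ p.1 ∧ p.1 < i ∧ i < p.2 ∧ p.2 < j ∧ Mn n p.1 p.2 = Mn n i j)).card

/-!
Since `1 ≤ k < 2` forces `k = 1`, `σ̃(2,n)` counts the `l` with `2 < l < n` and
`a(1,l) = a(2,n) = -1`; in the first row, strictly between the diagonal band and `a(1,n)`,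
the entry is `-1` exactly when `2l < n`, i.e. `l < m`.
-/

lemma Mn_two_self {n : ℤ} (hn : 5 ≤ n) : Mn n 2 n = -1 := by
  simp only [Mn, Prod.mk.injEq]
  split_ifs <;> omega

lemma Mn_one_eq_neg_one_iff {n l : ℤ} (hl : 2 < l) (hln : l < n) :
    Mn n 1 l = -1 ↔ 2 * l < n := by
  simp only [Mn, Prod.mk.injEq, true_and]
  split_ifs
  · omega
  · exact iff_of_false id (by omega)
  · exact iff_of_true rfl (by omega)

lemma sigmaTilde_two_eq_card_filter {n j : ℤ} (hj : j ≤ n + 1) :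
    sigmaTilde n 2 j = ((Finset.Ioo 2 j).filter (fun l => Mn n 1 l = Mn n 2 j)).card := by
  refine Finset.card_nbij' Prod.snd (fun l => (1, l)) ?_ ?_ ?_ ?_
  · rintro ⟨k, l⟩ h
    simp only [Finset.coe_filter, Finset.mem_product, Finset.mem_Icc, Set.mem_ofPred_eq] at h
    obtain rfl : k = 1 := by omega
    simp only [Finset.coe_filter, Finset.mem_Ioo, Set.mem_ofPred_eq]
    omega
  · intro l h
    simp only [Finset.coe_filter, Finset.mem_Ioo, Set.mem_ofPred_eq] at h
    simp only [Finset.coe_filter, Finset.mem_product, Finset.mem_Icc, Set.mem_ofPred_eq]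
    exact ⟨by omega, le_rfl, one_lt_two, h.1.1, h.1.2, h.2⟩
  · rintro ⟨k, l⟩ h
    simp only [Finset.coe_filter, Finset.mem_product, Finset.mem_Icc, Set.mem_ofPred_eq] at h
    simp only [Prod.mk.injEq, and_true]
    omega
  · intro l _
    rfl

theorem stmt_11_general (n : ℤ) (hn : 5 ≤ n) (m : ℤ) (hm : m = (n+1)/2) :
    (sigmaTilde n 2 n : ℤ) = m - 3 := by
  have hfirst_row : (Finset.Ioo 2 n).filter (fun l => Mn n 1 l = Mn n 2 n) = Finset.Ioo 2 m := by
    ext l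
    simp only [Finset.mem_filter, Finset.mem_Ioo, Mn_two_self hn]
    constructor
    · rintro ⟨⟨hl, hln⟩, h⟩
      have := (Mn_one_eq_neg_one_iff hl hln).1 h
      omega
    · rintro ⟨hl, hlm⟩
      exact ⟨⟨hl, by omega⟩, (Mn_one_eq_neg_one_iff hl (by omega)).2 (by omega)⟩
  rw [sigmaTilde_two_eq_card_filter (by omega), hfirst_row, Int.card_Ioo]
  omega

theorem stmt_11 (n : ℤ) (hn : 5 ≤ n) (hodd : Odd n) (m : ℤ) (hm : m = (n+1)/2) :
    (sigmaTilde n 2 n : ℤ) = m - 3 :=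
  stmt_11_general n hn m hm
end

section
/- For a positive integer n with n ≡ 3 (mod 4), the sum \sum_{j=(n+9)/4}^{(n-1)/2} \sum_{i=(n+3)/2-j}^{j-2} \sum_{k=i+1}^{j-1} \sum_{l=j+1}^{n-k} 1 equals (n-3)(n-7)(n^2-4n+7)/384. -/
/-!
Write n = 4m + 3. For fixed j, i, k the innermost sum counts n - j - k; summing this
arithmetic progression over k and the resulting product of two linear factors over i leaves
t(2t + 1)(6m - 1 - 4t)/3 with t = j - m - 2, and summing that over 1 ≤ t ≤ m - 1 gives
m(m - 1)(4m² + 2m + 1)/6, which is (n - 3)(n - 7)(n² - 4n + 7)/384. Every polynomial sum over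
an integer interval is evaluated by telescoping against an explicit antiderivative.
-/

open Finset

theorem sum_Icc_eq_sub_of_sub_pred {M : Type*} [AddCommGroup M] {f F : ℤ → M}
    (hf : ∀ k, f k = F k - F (k - 1)) {a b : ℤ} (h : a - 1 ≤ b) :
    ∑ k ∈ Icc a b, f k = F b - F (a - 1) := by
  induction b, h using Int.leInduction with
  | base => simp
  | succ b hb ih =>
    rw [← Order.succ_eq_add_one, ← insert_Icc_right_eq_Icc_succ (by simpa using hb),
      sum_insert (by simp), ih, hf, Order.succ_eq_add_one, add_sub_cancel_right]
    abel

theorem sum_Icc_const_sub {K : Type*} [Field K] [CharZero K] (c : K) {a b : ℤ} (h : a - 1 ≤ b) :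
    ∑ k ∈ Icc a b, (c - k) = (b + 1 - a) * (2 * c - a - b) / 2 := by
  rw [sum_Icc_eq_sub_of_sub_pred (F := fun k : ℤ ↦ (c * k - k * (k + 1) / 2 : K))
    (fun k ↦ by push_cast; ring) h]
  push_cast; ring

theorem sum_Icc_sub_mul_sub {K : Type*} [Field K] [CharZero K] (p q : K) {a b : ℤ} (h : a - 1 ≤ b) :
    ∑ i ∈ Icc a b, (p - i) * (q - i) =
      p * q * (b + 1 - a) - (p + q) * (b * (b + 1) - (a - 1) * a) / 2
        + (b * (b + 1) * (2 * b + 1) - (a - 1) * a * (2 * a - 1)) / 6 := by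
  rw [sum_Icc_eq_sub_of_sub_pred
    (F := fun i : ℤ ↦ (p * q * i - (p + q) * i * (i + 1) / 2 + i * (i + 1) * (2 * i + 1) / 6 : K))
    (fun i ↦ by push_cast; ring) h]
  push_cast; ring

theorem sum_Icc_one {R : Type*} [Ring R] {a b : ℤ} (h : a - 1 ≤ b) :
    ∑ _k ∈ Icc a b, (1 : R) = b + 1 - a := by
  rw [sum_const, nsmul_one, ← Int.cast_natCast, Int.card_Icc_of_le a b (by omega),
    Int.cast_sub, Int.cast_add, Int.cast_one]

theorem inner_triple_sum (m j : ℤ) (hj : m + 3 ≤ j) (hj' : j ≤ 2 * m + 1) :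
    ∑ i ∈ Icc (2 * m + 3 - j) (j - 2), ∑ k ∈ Icc (i + 1) (j - 1),
      ∑ _l ∈ Icc (j + 1) (4 * m + 3 - k), (1 : ℚ) =
      (j - m - 2) * (2 * (j - m - 2) + 1) * (6 * m - 1 - 4 * (j - m - 2)) / 3 := by
  have sum_kl : ∀ i ∈ Icc (2 * m + 3 - j) (j - 2),
      ∑ k ∈ Icc (i + 1) (j - 1), ∑ _l ∈ Icc (j + 1) (4 * m + 3 - k), (1 : ℚ) =
        ((j - 1 : ℚ) - i) * ((8 * m + 6 - 3 * j : ℚ) - i) / 2 := by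
    intro i hi
    rw [mem_Icc] at hi
    have sum_l : ∀ k ∈ Icc (i + 1) (j - 1),
        ∑ _l ∈ Icc (j + 1) (4 * m + 3 - k), (1 : ℚ) = (4 * m + 3 - j : ℚ) - k := by
      intro k hk
      rw [mem_Icc] at hk
      rw [sum_Icc_one (by omega)]
      push_cast; ring
    rw [sum_congr rfl sum_l, sum_Icc_const_sub _ (by omega)]
    push_cast; ring
  rw [sum_congr rfl sum_kl, ← sum_div, sum_Icc_sub_mul_sub _ _ (by omega)]
  push_cast; ring

theorem outer_sum (m : ℤ) (hm : 0 ≤ m) :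
    ∑ j ∈ Icc (m + 3) (2 * m + 1),
      ((j - m - 2) * (2 * (j - m - 2) + 1) * (6 * m - 1 - 4 * (j - m - 2)) / 3 : ℚ) =
      m * (m - 1) * (4 * m ^ 2 + 2 * m + 1) / 6 := by
  obtain rfl | hm := hm.eq_or_lt
  · simp
  rw [sum_Icc_eq_sub_of_sub_pred (F := fun j : ℤ ↦ ((j - m - 2) * (j - m - 1) *
      (2 * (2 * m - 1) * (2 * j - 2 * m - 3) + 6 * m - 1 - 4 * (j - m - 2) * (j - m - 1)) / 6 : ℚ))
      (fun j ↦ by push_cast; ring) (by omega)]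
  push_cast; ring

theorem stmt_15 (n : ℤ) (hn : 0 < n) (h4 : n % 4 = 3) :
    (∑ j ∈ Finset.Icc ((n+9)/4) ((n-1)/2), ∑ i ∈ Finset.Icc ((n+3)/2 - j) (j-2),
      ∑ k ∈ Finset.Icc (i+1) (j-1), ∑ l ∈ Finset.Icc (j+1) (n-k), (1:ℤ))
      = (n-3)*(n-7)*(n^2-4*n+7)/384 := by
  obtain ⟨m, hm, rfl⟩ : ∃ m, 0 ≤ m ∧ n = 4 * m + 3 := ⟨n / 4, by omega, by omega⟩
  rw [show (4 * m + 3 + 9) / 4 = m + 3 by omega, show (4 * m + 3 - 1) / 2 = 2 * m + 1 by omega,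
    show (4 * m + 3 + 3) / 2 = 2 * m + 3 by omega]
  refine (Int.ediv_eq_of_eq_mul_right (by norm_num) ?_).symm
  qify
  rw [sum_congr rfl fun j hj ↦ inner_triple_sum m j (mem_Icc.1 hj).1 (mem_Icc.1 hj).2,
    outer_sum m hm]
  ring
end
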